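/- Spectral theorem (spectral bundles part): suppose Σ_NED(A) = I₁ ∪ ⋯ ∪ I_n with 1 ≤ n ≤ N spectral intervals as in the spectral theorem, with 0 < a₁ ≤ b₁ < ⋯ < a_n ≤ b_n. Choose γ₀ ∈ ρ_NED(A) with (0,γ₀) ⊆ ρ_NED(A) if I₁ = [a₁,b₁] (if I₁ = (0,b₁], set W₀(l) := {0} and use U_{γ₀}(l) := ℝ^N in the formula for W₁); choose γ_n ∈ ρ_NED(A) with (γ_n,∞) ⊆ ρ_NED(A) if I_n = [a_n,b_n] (if I_n = [a_n,∞), set W_{n+1}(l) := {0} and use S_{γ_n}(l) := ℝ^N in the formula for W_n); and for n ≥ 2 choose γ_i ∈ ρ_NED(A) with b_i < γ_i < a_{i+1} for i = 1,…,n−1. Define W₀(l) = S_{γ₀}(l), W_i(l) = U_{γ_{i-1}}(l) ∩ S_{γ_i}(l) for i = 1,…,n, and W_{n+1}(l) = U_{γ_n}(l). Then for every l ∈ ℤ: dim W_i(l) ≥ 1 for i = 1,…,n; W_i(l) ∩ W_j(l) = {0} for i ≠ j; W₀(l) + W₁(l) + ⋯ + W_{n+1}(l) = ℝ^N; and the subspaces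 W_i(l) are independent of the admissible choices of γ₀,…,γ_n. -/

import Mathlib

/-!
On `ℤ` the weight `ε ^ l` of a nonuniform dichotomy tends to `0` as `l → -∞`, which forces
`ε = 1`: every point of `ρ_NED(A)` carries a uniform exponential dichotomy, whose stable and
unstable sets are the range and the kernel of its projector. The same projector still works at
nearby weights, so these sets are locally constant on `ρ_NED(A)`, hence constant on each gap
between spectral intervals; this is the independence of the choice of `γ₀, …, γ_n`.

Along `γ₀ < γ₁ < ⋯ < γ_n` the ranges increase and the kernels decrease, so the projectors,
padded by `0` below and `1` above, form a chain of idempotents `Q₀, …, Q_{n+2}` with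
`W_i = ker Q_i ∩ range Q_{i+1}`. Such layers meet trivially, and `ξ = ∑ (Q_{i+1} ξ - Q_i ξ)`
telescopes. Finally `W_i ≠ 0` for `1 ≤ i ≤ n`: if `Q_i = Q_{i+1}`, the stable rate of the one
and the unstable rate of the other would give a dichotomy at `a_i ∈ Σ_NED(A)`.
-/

open Matrix

attribute [local instance] Matrix.linftyOpNormedAddCommGroup

abbrev Mat (N : ℕ) := Matrix (Fin N) (Fin N) ℝ

noncomputable def fundSolNat {N : ℕ} (A : ℤ → GL (Fin N) ℝ) : ℕ → GL (Fin N) ℝ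
  | 0 => 1
  | n + 1 => A (n : ℤ) * fundSolNat A n

noncomputable def fundSolNeg {N : ℕ} (A : ℤ → GL (Fin N) ℝ) : ℕ → GL (Fin N) ℝ
  | 0 => (A (-1))⁻¹
  | n + 1 => (A (Int.negSucc (n + 1)))⁻¹ * fundSolNeg A n

noncomputable def fundSol {N : ℕ} (A : ℤ → GL (Fin N) ℝ) : ℤ → GL (Fin N) ℝ
  | Int.ofNat n => fundSolNat A n
  | Int.negSucc n => fundSolNeg A n

/-- The evolution operator `Φ(k,l)` of `x_{k+1} = A_k x_k`. -/
noncomputable def evol {N : ℕ} (A : ℤ → GL (Fin N) ℝ) (k l : ℤ) : Mat N :=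
  ↑(fundSol A k * (fundSol A l)⁻¹)

def IsInvariantProjector {N : ℕ} (A : ℤ → GL (Fin N) ℝ) (P : ℤ → Mat N) : Prop :=
  (∀ k, P k * P k = P k) ∧ ∀ k, P (k + 1) * (A k : Mat N) = (A k : Mat N) * P k

/-- Evolution operator `Φ_γ(k,l) = γ^{-(k-l)} Φ(k,l)` of `x_{k+1} = (1/γ) A_k x_k`. -/
noncomputable def evolW {N : ℕ} (A : ℤ → GL (Fin N) ℝ) (γ : ℝ) (k l : ℤ) : Mat N :=
  γ ^ (l - k) • evol A k l

def NEDWith {N : ℕ} (A : ℤ → GL (Fin N) ℝ) (γ : ℝ) (P : ℤ → Mat N) (K α ε : ℝ) : Prop :=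
  IsInvariantProjector A P ∧ 1 ≤ K ∧ 0 < α ∧ α < 1 ∧ 1 ≤ ε ∧
    (∀ k l : ℤ, l ≤ k → ‖evolW A γ k l * P l‖ ≤ K * α ^ (k - l) * ε ^ l) ∧
    (∀ k l : ℤ, k ≤ l → ‖evolW A γ k l * (1 - P l)‖ ≤ K * (1 / α) ^ (k - l) * ε ^ l)

def HasNED {N : ℕ} (A : ℤ → GL (Fin N) ℝ) (γ : ℝ) : Prop :=
  ∃ P K α ε, NEDWith A γ P K α ε

def HasStrongNED {N : ℕ} (A : ℤ → GL (Fin N) ℝ) (γ : ℝ) : Prop :=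
  ∃ P K α ε, NEDWith A γ P K α ε ∧ α * ε ^ 2 < 1

def HasED {N : ℕ} (A : ℤ → GL (Fin N) ℝ) (γ : ℝ) : Prop :=
  ∃ P K α, NEDWith A γ P K α 1

def SigmaNED {N : ℕ} (A : ℤ → GL (Fin N) ℝ) : Set ℝ := {γ | 0 < γ ∧ ¬ HasStrongNED A γ}

def rhoNED {N : ℕ} (A : ℤ → GL (Fin N) ℝ) : Set ℝ := {γ | 0 < γ ∧ HasStrongNED A γ}

def SigmaED {N : ℕ} (A : ℤ → GL (Fin N) ℝ) : Set ℝ := {γ | 0 < γ ∧ ¬ HasED A γ}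

def stableSet {N : ℕ} (A : ℤ → GL (Fin N) ℝ) (γ ε : ℝ) (l : ℤ) : Set (Fin N → ℝ) :=
  {ξ | ∃ C : ℝ, ∀ k : ℤ, l ≤ k → ‖(evol A k l).mulVec ξ‖ * γ ^ (-k) * ε ^ (-l) ≤ C}

def unstableSet {N : ℕ} (A : ℤ → GL (Fin N) ℝ) (γ ε : ℝ) (l : ℤ) : Set (Fin N → ℝ) :=
  {ξ | ∃ C : ℝ, ∀ k : ℤ, k ≤ l → ‖(evol A k l).mulVec ξ‖ * γ ^ (-k) * ε ^ (-l) ≤ C}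

/-- The `i`-th spectral interval (`i = 1, …, n`): `[a_i, b_i]` in general, possibly
`(0, b₁]` for `i = 1` and possibly `[a_n, ∞)` for `i = n`. -/
def specInterval (n : ℕ) (lowFull highInf : Bool) (a b : ℕ → ℝ) (i : ℕ) : Set ℝ :=
  if i = 1 ∧ lowFull then Set.Ioc 0 (b 1)
  else if i = n ∧ highInf then Set.Ici (a n)
  else Set.Icc (a i) (b i)

/-- An admissible choice of resolvent points `γ₀ < I₁ < γ₁ < I₂ < ⋯ < I_n < γ_n`
(with the corresponding strong nonuniform exponential dichotomy data), where `γ₀`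
is omitted if `I₁ = (0,b₁]` and `γ_n` is omitted if `I_n = [a_n,∞)`. -/
def AdmissibleChoice {N : ℕ} (A : ℤ → GL (Fin N) ℝ) (n : ℕ)
    (lowFull highInf : Bool) (a b : ℕ → ℝ)
    (γ : ℕ → ℝ) (P : ℕ → ℤ → Mat N) (K α ε : ℕ → ℝ) : Prop :=
  (lowFull = false → 0 < γ 0 ∧ Set.Ioo 0 (γ 0) ⊆ rhoNED A ∧
      NEDWith A (γ 0) (P 0) (K 0) (α 0) (ε 0) ∧ α 0 * ε 0 ^ 2 < 1) ∧
  (highInf = false → 0 < γ n ∧ Set.Ioi (γ n) ⊆ rhoNED A ∧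
      NEDWith A (γ n) (P n) (K n) (α n) (ε n) ∧ α n * ε n ^ 2 < 1) ∧
  (∀ i, 1 ≤ i → i < n → b i < γ i ∧ γ i < a (i + 1) ∧
      NEDWith A (γ i) (P i) (K i) (α i) (ε i) ∧ α i * ε i ^ 2 < 1)

/-- The spectral bundles: `W₀(l) = S_{γ₀}(l)`, `W_i(l) = U_{γ_{i-1}}(l) ∩ S_{γ_i}(l)`
for `i = 1, …, n`, and `W_{n+1}(l) = U_{γ_n}(l)`, with the conventions `W₀ = {0}`,
`U_{γ₀} = ℝ^N` if `I₁ = (0,b₁]`, and `W_{n+1} = {0}`, `S_{γ_n} = ℝ^N` if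
`I_n = [a_n,∞)`. -/
noncomputable def specBundle {N : ℕ} (A : ℤ → GL (Fin N) ℝ) (n : ℕ)
    (lowFull highInf : Bool) (γ ε : ℕ → ℝ) (i : ℕ) (l : ℤ) : Set (Fin N → ℝ) :=
  if i = 0 then
    (if lowFull then {0} else stableSet A (γ 0) (ε 0) l)
  else if i = n + 1 then
    (if highInf then {0} else unstableSet A (γ n) (ε n) l)
  else
    (if i = 1 ∧ lowFull then Set.univ else unstableSet A (γ (i - 1)) (ε (i - 1)) l) ∩
    (if i = n ∧ highInf then Set.univ else stableSet A (γ i) (ε i) l)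

attribute [local instance] Matrix.linftyOpNormedSpace

open Set

section Evolution

variable {N : ℕ} (A : ℤ → GL (Fin N) ℝ)

theorem fundSol_succ (k : ℤ) : fundSol A (k + 1) = A k * fundSol A k := by
  rcases k with m | _ | m
  · rfl
  · exact (mul_inv_cancel (A (-1))).symm
  · exact (mul_inv_cancel_left (A (Int.negSucc (m + 1))) (fundSolNeg A m)).symm

theorem evol_mul (k m l : ℤ) : evol A k m * evol A m l = evol A k l := by
  rw [evol, evol, evol, ← Units.val_mul]
  group

theorem evol_self (l : ℤ) : evol A l l = 1 := by
  rw [evol, mul_inv_cancel, Units.val_one]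

theorem evol_succ_left (k l : ℤ) : evol A (k + 1) l = A k * evol A k l := by
  rw [evol, evol, fundSol_succ, mul_assoc, Units.val_mul]

variable {A} {P Q : ℤ → Mat N}

theorem IsInvariantProjector.mul_evol (hP : IsInvariantProjector A P) (k l : ℤ) :
    P k * evol A k l = evol A k l * P l := by
  induction k using Int.inductionOn' (b := l) with
  | zero => rw [evol_self, one_mul, mul_one]
  | succ k _ ih => rw [evol_succ_left, ← mul_assoc, hP.2, mul_assoc, ih, mul_assoc]
  | pred k _ ih =>
    have hstep := evol_succ_left A (k - 1) l
    rw [sub_add_cancel] at hstep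
    rw [← Units.mul_right_inj (A (k - 1)), ← mul_assoc, ← hP.2, sub_add_cancel, mul_assoc,
      ← hstep, ih, hstep, mul_assoc]

theorem IsInvariantProjector.one_sub (hP : IsInvariantProjector A P) :
    IsInvariantProjector A fun k => 1 - P k := by
  refine ⟨fun k => ?_, fun k => ?_⟩
  · rw [mul_sub, sub_mul, sub_mul, hP.1 k, one_mul, mul_one, one_mul, sub_self, sub_zero]
  · rw [sub_mul, mul_sub, one_mul, mul_one, hP.2 k]

theorem IsInvariantProjector.evol_mul_mul_evol (hP : IsInvariantProjector A P) (k l : ℤ) :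
    evol A l k * P k * evol A k l = P l := by
  rw [mul_assoc, hP.mul_evol, ← mul_assoc, evol_mul, evol_self, one_mul]

theorem IsInvariantProjector.eq_of_apply_eq (hP : IsInvariantProjector A P)
    (hQ : IsInvariantProjector A Q) {l : ℤ} (h : P l = Q l) : P = Q := by
  funext k
  rw [← hP.evol_mul_mul_evol l k, ← hQ.evol_mul_mul_evol l k, h]

theorem isInvariantProjector_zero : IsInvariantProjector A 0 :=
  ⟨fun _ => mul_zero 0, fun _ => by simp⟩

theorem isInvariantProjector_one : IsInvariantProjector A 1 :=
  ⟨fun _ => mul_one 1, fun _ => by simp⟩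

end Evolution

section Dichotomy

variable {N : ℕ} {A : ℤ → GL (Fin N) ℝ} {P : ℤ → Mat N} {γ σ K α ε μ ν : ℝ}

theorem Matrix.eq_zero_of_isIdempotentElem_of_norm_lt_one {M : Mat N} (hM : IsIdempotentElem M)
    (h : ‖M‖ < 1) : M = 0 := by
  have hle : ‖M‖ ≤ ‖M‖ * ‖M‖ := by
    conv_lhs => rw [← hM.eq]
    exact Matrix.linfty_opNorm_mul M M
  exact norm_eq_zero.1 (by nlinarith [norm_nonneg M])

theorem evolW_self (γ : ℝ) (l : ℤ) : evolW A γ l l = 1 := by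
  rw [evolW, evol_self, sub_self, zpow_zero, one_smul]

/-- On `ℤ` the weight `ε ^ l` tends to `0` as `l → -∞` when `ε > 1`, so the dichotomy bounds
at `k = l` would make both `P l` and `1 - P l` small, hence zero. -/
theorem NEDWith.eps_eq_one (h : NEDWith A γ P K α ε) (hN : 0 < N) : ε = 1 := by
  obtain ⟨hP, -, -, -, hε, hs, hu⟩ := h
  by_contra hne
  have hε1 : 1 < ε := lt_of_le_of_ne hε (Ne.symm hne)
  obtain ⟨m, hm⟩ : ∃ m : ℕ, K * ε⁻¹ ^ m < 1 :=
    (((tendsto_pow_atTop_nhds_zero_of_lt_one (by positivity) (inv_lt_one_of_one_lt₀ hε1)).const_mul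
      K).eventually (gt_mem_nhds (by norm_num))).exists
  have hsmall : K * ε ^ (-(m : ℤ)) < 1 := by rwa [_root_.zpow_neg, zpow_natCast, ← inv_pow]
  have h0 : P (-m) = 0 := Matrix.eq_zero_of_isIdempotentElem_of_norm_lt_one (hP.1 _) <|
    lt_of_le_of_lt (by simpa [evolW_self] using hs (-m) (-m) le_rfl) hsmall
  have h1 : 1 - P (-m) = 0 := Matrix.eq_zero_of_isIdempotentElem_of_norm_lt_one (hP.one_sub.1 _) <|
    lt_of_le_of_lt (by simpa [evolW_self] using hu (-m) (-m) le_rfl) hsmall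
  have : Nonempty (Fin N) := ⟨⟨0, hN⟩⟩
  rw [h0, sub_zero] at h1
  exact one_ne_zero h1

theorem hasStrongNED_iff_hasED (hN : 0 < N) : HasStrongNED A γ ↔ HasED A γ := by
  constructor
  · rintro ⟨P, K, α, ε, h, -⟩
    obtain rfl := h.eps_eq_one hN
    exact ⟨P, K, α, h⟩
  · rintro ⟨P, K, α, h⟩
    exact ⟨P, K, α, 1, h, by simpa using h.2.2.2.1⟩

variable (A) in
def HasStableRate (P : ℤ → Mat N) (μ : ℝ) : Prop :=
  ∃ K, ∀ k l : ℤ, l ≤ k → ‖evol A k l * P l‖ ≤ K * μ ^ (k - l)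

variable (A) in
def HasUnstableRate (P : ℤ → Mat N) (ν : ℝ) : Prop :=
  ∃ K, ∀ k l : ℤ, k ≤ l → ‖evol A k l * (1 - P l)‖ ≤ K * ν ^ (k - l)

theorem hasStableRate_zero : HasStableRate A 0 μ :=
  ⟨0, fun _ _ _ => by simp⟩

theorem hasUnstableRate_one : HasUnstableRate A 1 ν :=
  ⟨0, fun _ _ _ => by simp⟩

theorem zpow_le_zpow_left_of_nonpos {a b : ℝ} {n : ℤ} (ha : 0 < a) (hab : a ≤ b) (hn : n ≤ 0) :
    b ^ n ≤ a ^ n := by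
  obtain ⟨m, rfl⟩ : ∃ m, n = -m := ⟨-n, (neg_neg n).symm⟩
  rw [_root_.zpow_neg, _root_.zpow_neg]
  exact inv_anti₀ (zpow_pos ha _) (zpow_le_zpow_left₀ (neg_nonpos.1 hn) ha.le hab)

theorem norm_evolW_mul_le_iff (hσ : 0 < σ) {M : Mat N} {K β : ℝ} {k l : ℤ} :
    ‖evolW A σ k l * M‖ ≤ K * β ^ (k - l) ↔ ‖evol A k l * M‖ ≤ K * (β * σ) ^ (k - l) := by
  rw [evolW, Matrix.smul_mul, norm_smul, Real.norm_of_nonneg (zpow_pos hσ _).le, ← neg_sub k l,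
    _root_.zpow_neg, inv_mul_le_iff₀ (zpow_pos hσ _), mul_zpow, mul_left_comm, mul_comm (β ^ _)]

theorem NEDWith.hasStableRate (h : NEDWith A σ P K α 1) (hσ : 0 < σ) :
    HasStableRate A P (α * σ) :=
  ⟨K, fun k l hkl => by
    have h' := h.2.2.2.2.2.1 k l hkl
    rwa [_root_.one_zpow, mul_one, norm_evolW_mul_le_iff hσ] at h'⟩

theorem NEDWith.hasUnstableRate (h : NEDWith A σ P K α 1) (hσ : 0 < σ) :
    HasUnstableRate A P (σ / α) :=
  ⟨K, fun k l hkl => by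
    have h' := h.2.2.2.2.2.2 k l hkl
    rwa [_root_.one_zpow, mul_one, norm_evolW_mul_le_iff hσ, one_div_mul_eq_div] at h'⟩

end Dichotomy

section StableSets

variable {N : ℕ} {A : ℤ → GL (Fin N) ℝ} {P : ℤ → Mat N} {σ K α ε μ ν : ℝ}

theorem hasED_of_rates (hP : IsInvariantProjector A P) (hs : HasStableRate A P μ)
    (hu : HasUnstableRate A P ν) (hμ : 0 < μ) (hμσ : μ < σ) (hσν : σ < ν) : HasED A σ := by
  obtain ⟨K₁, hK₁⟩ := hs
  obtain ⟨K₂, hK₂⟩ := hu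
  have hσ : 0 < σ := hμ.trans hμσ
  set α := max (μ / σ) (σ / ν)
  set K := max 1 (max K₁ K₂)
  have hα : 0 < α := lt_max_of_lt_left (div_pos hμ hσ)
  have hα1 : α < 1 := max_lt ((div_lt_one hσ).2 hμσ) ((div_lt_one (hσ.trans hσν)).2 hσν)
  have hμα : μ ≤ α * σ := (div_le_iff₀ hσ).1 (le_max_left _ _)
  have hαν : 1 / α * σ ≤ ν := by
    rw [one_div_mul_eq_div, div_le_iff₀ hα, mul_comm, ← div_le_iff₀ (hσ.trans hσν)]
    exact le_max_right _ _
  refine ⟨P, K, α, hP, le_max_left _ _, hα, hα1, le_rfl, fun k l hkl => ?_, fun k l hkl => ?_⟩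
  · rw [_root_.one_zpow, mul_one, norm_evolW_mul_le_iff hσ]
    refine (hK₁ k l hkl).trans (mul_le_mul ?_ ?_ (zpow_pos hμ _).le (by positivity))
    · exact (le_max_left _ _).trans (le_max_right _ _)
    · exact zpow_le_zpow_left₀ (sub_nonneg.2 hkl) hμ.le hμα
  · rw [_root_.one_zpow, mul_one, norm_evolW_mul_le_iff hσ]
    refine (hK₂ k l hkl).trans (mul_le_mul ?_ ?_ (zpow_pos (hσ.trans hσν) _).le (by positivity))
    · exact (le_max_right _ _).trans (le_max_right _ _)
    · exact zpow_le_zpow_left_of_nonpos (by positivity) hαν (sub_nonpos.2 hkl)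

theorem eq_zero_of_norm_le_mul_pow {E : Type*} [NormedAddCommGroup E] {v : E} {D r : ℝ}
    (hr : 0 ≤ r) (hr1 : r < 1) (h : ∀ m : ℕ, ‖v‖ ≤ D * r ^ m) : v = 0 :=
  norm_le_zero_iff.1 <| ge_of_tendsto'
    (by simpa using (tendsto_pow_atTop_nhds_zero_of_lt_one hr hr1).const_mul D) h

theorem mul_zpow_neg_le_mul_zpow_neg_iff (hσ : 0 < σ) {x C : ℝ} {k l : ℤ} :
    x * σ ^ (-k) * 1 ^ (-l) ≤ C * σ ^ (-l) ↔ x ≤ C * σ ^ (k - l) := by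
  rw [_root_.one_zpow, mul_one, ← le_div_iff₀ (zpow_pos hσ _), mul_div_assoc,
    ← zpow_sub₀ hσ.ne', neg_sub_neg]

theorem mem_stableSet_one_iff (hσ : 0 < σ) {l : ℤ} {ξ : Fin N → ℝ} :
    ξ ∈ stableSet A σ 1 l ↔ ∃ C, ∀ k, l ≤ k → ‖evol A k l *ᵥ ξ‖ ≤ C * σ ^ (k - l) := by
  constructor
  · rintro ⟨C, hC⟩
    refine ⟨C * σ ^ l, fun k hk => mul_zpow_neg_le_mul_zpow_neg_iff hσ |>.1 ?_⟩
    rw [mul_assoc C, ← zpow_add₀ hσ.ne', add_neg_cancel, zpow_zero, mul_one]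
    exact hC k hk
  · rintro ⟨C, hC⟩
    exact ⟨C * σ ^ (-l), fun k hk => mul_zpow_neg_le_mul_zpow_neg_iff hσ |>.2 (hC k hk)⟩

theorem mem_unstableSet_one_iff (hσ : 0 < σ) {l : ℤ} {ξ : Fin N → ℝ} :
    ξ ∈ unstableSet A σ 1 l ↔ ∃ C, ∀ k, k ≤ l → ‖evol A k l *ᵥ ξ‖ ≤ C * σ ^ (k - l) := by
  constructor
  · rintro ⟨C, hC⟩
    refine ⟨C * σ ^ l, fun k hk => mul_zpow_neg_le_mul_zpow_neg_iff hσ |>.1 ?_⟩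
    rw [mul_assoc C, ← zpow_add₀ hσ.ne', add_neg_cancel, zpow_zero, mul_one]
    exact hC k hk
  · rintro ⟨C, hC⟩
    exact ⟨C * σ ^ (-l), fun k hk => mul_zpow_neg_le_mul_zpow_neg_iff hσ |>.2 (hC k hk)⟩

theorem stableSet_one_eq (hP : IsInvariantProjector A P) (hs : HasStableRate A P μ)
    (hu : HasUnstableRate A P ν) (hμ : 0 < μ) (hμσ : μ < σ) (hσν : σ < ν) (l : ℤ) :
    stableSet A σ 1 l = {ξ | P l *ᵥ ξ = ξ} := by
  have hσ := hμ.trans hμσ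
  ext ξ
  rw [mem_stableSet_one_iff hσ, mem_ofPred_eq]
  constructor
  · rintro ⟨C, hC⟩
    obtain ⟨K, hK⟩ := hu
    suffices (1 - P l) *ᵥ ξ = 0 by rwa [sub_mulVec, one_mulVec, sub_eq_zero, eq_comm] at this
    refine eq_zero_of_norm_le_mul_pow (D := K * C) (div_pos hσ (hσ.trans hσν)).le
      ((div_lt_one (hσ.trans hσν)).2 hσν) fun m => ?_
    have hv : (1 - P l) *ᵥ ξ =
        (evol A l (l + m) * (1 - P (l + m))) *ᵥ (evol A (l + m) l *ᵥ ξ) := by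
      rw [mulVec_mulVec, hP.one_sub.evol_mul_mul_evol]
    have h1 := hK l (l + m) (by omega)
    have h2 := hC (l + m) (by omega)
    calc ‖(1 - P l) *ᵥ ξ‖
        ≤ ‖evol A l (l + m) * (1 - P (l + m))‖ * ‖evol A (l + m) l *ᵥ ξ‖ :=
          hv ▸ linfty_opNorm_mulVec _ _
      _ ≤ K * ν ^ (l - (l + m)) * (C * σ ^ (l + m - l)) :=
          mul_le_mul h1 h2 (norm_nonneg _) ((norm_nonneg _).trans h1)
      _ = K * C * (σ / ν) ^ m := by
          rw [show l - (l + (m : ℤ)) = -(m : ℤ) by ring, show l + (m : ℤ) - l = m by ring,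
            _root_.zpow_neg, zpow_natCast, zpow_natCast, div_pow]
          ring
  · intro hξ
    obtain ⟨K, hK⟩ := hs
    have hK0 : 0 ≤ K := by simpa using (norm_nonneg _).trans (hK l l le_rfl)
    refine ⟨K * ‖ξ‖, fun k hk => ?_⟩
    have hv : evol A k l *ᵥ ξ = (evol A k l * P l) *ᵥ ξ := by rw [← mulVec_mulVec, hξ]
    calc ‖evol A k l *ᵥ ξ‖ ≤ ‖evol A k l * P l‖ * ‖ξ‖ := hv ▸ linfty_opNorm_mulVec _ _
      _ ≤ K * μ ^ (k - l) * ‖ξ‖ := by gcongr; exact hK k l hk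
      _ ≤ K * σ ^ (k - l) * ‖ξ‖ := by
          gcongr
          exact zpow_le_zpow_left₀ (sub_nonneg.2 hk) hμ.le hμσ.le
      _ = K * ‖ξ‖ * σ ^ (k - l) := by ring

theorem unstableSet_one_eq (hP : IsInvariantProjector A P) (hs : HasStableRate A P μ)
    (hu : HasUnstableRate A P ν) (hμ : 0 < μ) (hμσ : μ < σ) (hσν : σ < ν) (l : ℤ) :
    unstableSet A σ 1 l = {ξ | P l *ᵥ ξ = 0} := by
  have hσ := hμ.trans hμσ
  ext ξ
  rw [mem_unstableSet_one_iff hσ, mem_ofPred_eq]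
  constructor
  · rintro ⟨C, hC⟩
    obtain ⟨K, hK⟩ := hs
    refine eq_zero_of_norm_le_mul_pow (D := K * C) (div_pos hμ hσ).le ((div_lt_one hσ).2 hμσ)
      fun m => ?_
    have hv : P l *ᵥ ξ = (evol A l (l - m) * P (l - m)) *ᵥ (evol A (l - m) l *ᵥ ξ) := by
      rw [mulVec_mulVec, hP.evol_mul_mul_evol]
    have h1 := hK l (l - m) (by omega)
    have h2 := hC (l - m) (by omega)
    calc ‖P l *ᵥ ξ‖
        ≤ ‖evol A l (l - m) * P (l - m)‖ * ‖evol A (l - m) l *ᵥ ξ‖ :=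
          hv ▸ linfty_opNorm_mulVec _ _
      _ ≤ K * μ ^ (l - (l - m)) * (C * σ ^ (l - m - l)) :=
          mul_le_mul h1 h2 (norm_nonneg _) ((norm_nonneg _).trans h1)
      _ = K * C * (μ / σ) ^ m := by
          rw [show l - (l - (m : ℤ)) = m by ring, show l - (m : ℤ) - l = -(m : ℤ) by ring,
            _root_.zpow_neg, zpow_natCast, zpow_natCast, div_pow]
          ring
  · intro hξ
    obtain ⟨K, hK⟩ := hu
    have hK0 : 0 ≤ K := by simpa using (norm_nonneg _).trans (hK l l le_rfl)
    refine ⟨K * ‖ξ‖, fun k hk => ?_⟩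
    have hv : evol A k l *ᵥ ξ = (evol A k l * (1 - P l)) *ᵥ ξ := by
      rw [← mulVec_mulVec, sub_mulVec, one_mulVec, hξ, sub_zero]
    calc ‖evol A k l *ᵥ ξ‖ ≤ ‖evol A k l * (1 - P l)‖ * ‖ξ‖ := hv ▸ linfty_opNorm_mulVec _ _
      _ ≤ K * ν ^ (k - l) * ‖ξ‖ := by gcongr; exact hK k l hk
      _ ≤ K * σ ^ (k - l) * ‖ξ‖ := by
          gcongr
          exact zpow_le_zpow_left_of_nonpos hσ hσν.le (sub_nonpos.2 hk)
      _ = K * ‖ξ‖ * σ ^ (k - l) := by ring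

theorem stableSet_mono {σ₁ σ₂ : ℝ} (hσ₁ : 0 < σ₁) (h : σ₁ ≤ σ₂) (l : ℤ) :
    stableSet A σ₁ 1 l ⊆ stableSet A σ₂ 1 l := by
  intro ξ hξ
  obtain ⟨C, hC⟩ := (mem_stableSet_one_iff hσ₁).1 hξ
  have hC0 : 0 ≤ C := by simpa using (norm_nonneg _).trans (hC l le_rfl)
  exact (mem_stableSet_one_iff (hσ₁.trans_le h)).2 ⟨C, fun k hk => (hC k hk).trans <|
    mul_le_mul_of_nonneg_left (zpow_le_zpow_left₀ (sub_nonneg.2 hk) hσ₁.le h) hC0⟩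

theorem unstableSet_anti {σ₁ σ₂ : ℝ} (hσ₁ : 0 < σ₁) (h : σ₁ ≤ σ₂) (l : ℤ) :
    unstableSet A σ₂ 1 l ⊆ unstableSet A σ₁ 1 l := by
  intro ξ hξ
  obtain ⟨C, hC⟩ := (mem_unstableSet_one_iff (hσ₁.trans_le h)).1 hξ
  have hC0 : 0 ≤ C := by simpa using (norm_nonneg _).trans (hC l le_rfl)
  exact (mem_unstableSet_one_iff hσ₁).2 ⟨C, fun k hk => (hC k hk).trans <|
    mul_le_mul_of_nonneg_left (zpow_le_zpow_left_of_nonpos hσ₁ h (sub_nonpos.2 hk)) hC0⟩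

theorem NEDWith.mul_lt_self (h : NEDWith A σ P K α ε) (hσ : 0 < σ) : α * σ < σ :=
  mul_lt_of_lt_one_left hσ h.2.2.2.1

theorem NEDWith.lt_div_self (h : NEDWith A σ P K α ε) (hσ : 0 < σ) : σ < σ / α :=
  (lt_div_iff₀ h.2.2.1).2 (by rw [mul_comm]; exact h.mul_lt_self hσ)

theorem NEDWith.stableSet_eq (h : NEDWith A σ P K α 1) (hσ : 0 < σ) (l : ℤ) :
    stableSet A σ 1 l = {ξ | P l *ᵥ ξ = ξ} :=
  stableSet_one_eq h.1 (h.hasStableRate hσ) (h.hasUnstableRate hσ) (mul_pos h.2.2.1 hσ)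
    (h.mul_lt_self hσ) (h.lt_div_self hσ) l

theorem NEDWith.unstableSet_eq (h : NEDWith A σ P K α 1) (hσ : 0 < σ) (l : ℤ) :
    unstableSet A σ 1 l = {ξ | P l *ᵥ ξ = 0} :=
  unstableSet_one_eq h.1 (h.hasStableRate hσ) (h.hasUnstableRate hσ) (mul_pos h.2.2.1 hσ)
    (h.mul_lt_self hσ) (h.lt_div_self hσ) l

theorem stableSet_eq_and_unstableSet_eq_of_isPreconnected {s : Set ℝ} (hs : IsPreconnected s)
    (hED : ∀ σ ∈ s, 0 < σ ∧ HasED A σ) {σ τ : ℝ} (hσ : σ ∈ s) (hτ : τ ∈ s) (l : ℤ) :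
    stableSet A σ 1 l = stableSet A τ 1 l ∧ unstableSet A σ 1 l = unstableSet A τ 1 l := by
  refine hs.induction₂ (fun σ τ => stableSet A σ 1 l = stableSet A τ 1 l ∧
      unstableSet A σ 1 l = unstableSet A τ 1 l) (fun σ hσ => ?_)
    (fun _ _ _ _ _ _ h h' => ⟨h.1.trans h'.1, h.2.trans h'.2⟩)
    (fun _ _ _ _ h => ⟨h.1.symm, h.2.symm⟩) hσ hτ
  obtain ⟨hσ0, P, K, α, h⟩ := hED σ hσ
  have hs := h.hasStableRate hσ0
  have hu := h.hasUnstableRate hσ0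
  have hμ : 0 < α * σ := mul_pos h.2.2.1 hσ0
  filter_upwards [eventually_nhdsWithin_of_eventually_nhds
    (Ioo_mem_nhds (h.mul_lt_self hσ0) (h.lt_div_self hσ0))] with τ hτ
  rw [h.stableSet_eq hσ0, stableSet_one_eq h.1 hs hu hμ hτ.1 hτ.2,
    h.unstableSet_eq hσ0, unstableSet_one_eq h.1 hs hu hμ hτ.1 hτ.2]
  exact ⟨rfl, rfl⟩

end StableSets

section ProjChain

variable {R M : Type*} [Ring R] [AddCommGroup M] [Module R M] {E : ℕ → Module.End R M}

def chainLayer (E : ℕ → Module.End R M) (i : ℕ) : Submodule R M :=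
  LinearMap.ker (E i) ⊓ LinearMap.range (E (i + 1))

structure IsProjChain (E : ℕ → Module.End R M) : Prop where
  isIdempotentElem : ∀ i, IsIdempotentElem (E i)
  range_mono : Monotone fun i => LinearMap.range (E i)
  ker_anti : Antitone fun i => LinearMap.ker (E i)

namespace IsProjChain

theorem apply_apply_of_le (hE : IsProjChain E) {i j : ℕ} (hij : i ≤ j) (x : M) :
    E j (E i x) = E i x :=
  (LinearMap.IsIdempotentElem.mem_range_iff (hE.isIdempotentElem j)).1
    (hE.range_mono hij (LinearMap.mem_range_self _ x))

theorem apply_apply_of_le' (hE : IsProjChain E) {i j : ℕ} (hij : i ≤ j) (x : M) :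
    E i (E j x) = E i x := by
  have hker : x - E j x ∈ LinearMap.ker (E j) := by
    rw [LinearMap.mem_ker, map_sub, ← Module.End.mul_apply, (hE.isIdempotentElem j).eq, sub_self]
  rw [← sub_eq_zero, ← map_sub, ← neg_sub, map_neg, hE.ker_anti hij hker, neg_zero]

theorem sub_mem_chainLayer (hE : IsProjChain E) (i : ℕ) (x : M) :
    E (i + 1) x - E i x ∈ chainLayer E i := by
  refine ⟨?_, ?_⟩
  · rw [SetLike.mem_coe, LinearMap.mem_ker, map_sub, hE.apply_apply_of_le' (Nat.le_succ i),
      ← Module.End.mul_apply, (hE.isIdempotentElem i).eq, sub_self]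
  · rw [SetLike.mem_coe, LinearMap.IsIdempotentElem.mem_range_iff (hE.isIdempotentElem _), map_sub,
      hE.apply_apply_of_le (Nat.le_succ i), ← Module.End.mul_apply, (hE.isIdempotentElem _).eq]

theorem chainLayer_inf_chainLayer (hE : IsProjChain E) {i j : ℕ} (hij : i ≠ j) :
    chainLayer E i ⊓ chainLayer E j = ⊥ := by
  wlog h : i < j generalizing i j
  · rw [inf_comm]; exact this hij.symm (by omega)
  refine eq_bot_iff.2 ?_
  rintro x ⟨⟨-, hxi⟩, hxj, -⟩
  rw [SetLike.mem_coe, LinearMap.IsIdempotentElem.mem_range_iff (hE.isIdempotentElem _)] at hxi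
  rw [Submodule.mem_bot, ← hxi, ← hE.apply_apply_of_le' h, LinearMap.mem_ker.1 hxj, map_zero]

theorem chainLayer_ne_bot (hE : IsProjChain E) {i : ℕ} (h : E i ≠ E (i + 1)) :
    chainLayer E i ≠ ⊥ := by
  obtain ⟨x, hx⟩ := DFunLike.ne_iff.1 h
  exact Submodule.ne_bot_iff _ |>.2 ⟨_, hE.sub_mem_chainLayer i x, sub_ne_zero.2 hx.symm⟩

end IsProjChain

end ProjChain

section SpectralGaps

variable {N n : ℕ} {A : ℤ → GL (Fin N) ℝ} {lowFull highInf : Bool} {a b : ℕ → ℝ}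

structure IsSpectralDecomposition (A : ℤ → GL (Fin N) ℝ) (n : ℕ) (lowFull highInf : Bool)
    (a b : ℕ → ℝ) : Prop where
  one_le : 1 ≤ n
  pos_le : ∀ i, 1 ≤ i → i ≤ n → 0 < a i ∧ a i ≤ b i
  lt_succ : ∀ i, 1 ≤ i → i < n → b i < a (i + 1)
  sigmaNED_eq : SigmaNED A = ⋃ i ∈ Set.Icc 1 n, specInterval n lowFull highInf a b i

/-- The open gap between `I_m` and `I_{m+1}`, with the conventions `b₀ = 0`, `a_{n+1} = ∞`. -/
def spectralGap (n : ℕ) (a b : ℕ → ℝ) (m : ℕ) : Set ℝ :=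
  {x | 0 < x ∧ (1 ≤ m → b m < x) ∧ (m < n → x < a (m + 1))}

/-- The indices `m` for which an admissible choice fixes `γ_m`. -/
def IsGammaIndex (n : ℕ) (lowFull highInf : Bool) (m : ℕ) : Prop :=
  m ≤ n ∧ (m = 0 → lowFull = false) ∧ (m = n → highInf = false)

theorem spectralGap_ordConnected (m : ℕ) : (spectralGap n a b m).OrdConnected :=
  ⟨fun _ hx _ hy _ hz => ⟨hx.1.trans_le hz.1, fun h => (hx.2.1 h).trans_le hz.1,
    fun h => hz.2.trans_lt (hy.2.2 h)⟩⟩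

namespace IsSpectralDecomposition

theorem b_le_b (hdec : IsSpectralDecomposition A n lowFull highInf a b) {i j : ℕ} (hi : 1 ≤ i)
    (hij : i ≤ j) (hj : j ≤ n) : b i ≤ b j := by
  induction j, hij using Nat.le_induction with
  | base => rfl
  | succ j hij ih =>
    linarith [ih (by omega), hdec.lt_succ j (by omega) (by omega),
      (hdec.pos_le (j + 1) (by omega) hj).2]

theorem a_le_a (hdec : IsSpectralDecomposition A n lowFull highInf a b) {i j : ℕ} (hi : 1 ≤ i)
    (hij : i ≤ j) (hj : j ≤ n) : a i ≤ a j := by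
  induction j, hij using Nat.le_induction with
  | base => rfl
  | succ j hij ih =>
    linarith [ih (by omega), hdec.lt_succ j (by omega) (by omega),
      (hdec.pos_le j (by omega) (by omega)).2]

theorem Icc_subset_sigmaNED (hdec : IsSpectralDecomposition A n lowFull highInf a b) {i : ℕ}
    (hi : 1 ≤ i) (hin : i ≤ n) : Icc (a i) (b i) ⊆ SigmaNED A := by
  intro x hx
  rw [hdec.sigmaNED_eq]
  refine mem_biUnion (x := i) ⟨hi, hin⟩ ?_
  unfold specInterval
  split_ifs with h1 h2
  · obtain ⟨rfl, -⟩ := h1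
    exact ⟨(hdec.pos_le 1 hi hin).1.trans_le hx.1, hx.2⟩
  · exact hx.1.trans' (h2.1 ▸ le_rfl)
  · exact hx

theorem spectralGap_subset_rhoNED (hdec : IsSpectralDecomposition A n lowFull highInf a b) {m : ℕ}
    (hm : IsGammaIndex n lowFull highInf m) : spectralGap n a b m ⊆ rhoNED A := by
  intro x hx
  refine ⟨hx.1, by_contra fun hρ => ?_⟩
  have hxS : x ∈ SigmaNED A := ⟨hx.1, hρ⟩
  rw [hdec.sigmaNED_eq] at hxS
  obtain ⟨j, ⟨hj1, hjn⟩, hxj⟩ := mem_iUnion₂.1 hxS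
  unfold specInterval at hxj
  split_ifs at hxj with h1 h2
  · obtain ⟨rfl, hlow⟩ := h1
    have hm1 : 1 ≤ m := Nat.one_le_iff_ne_zero.2 fun h => by simp [hm.2.1 h] at hlow
    linarith [hxj.2, hdec.b_le_b le_rfl hm1 hm.1, hx.2.1 hm1]
  · obtain ⟨rfl, hhigh⟩ := h2
    have hmj : m < j := lt_of_le_of_ne hm.1 fun h => by simp [hm.2.2 h] at hhigh
    linarith [mem_Ici.1 hxj, hdec.a_le_a (by omega) hmj le_rfl, hx.2.2 hmj]
  · rcases le_or_gt j m with hjm | hmj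
    · linarith [hxj.2, hdec.b_le_b hj1 hjm hm.1, hx.2.1 (hj1.trans hjm)]
    · linarith [hxj.1, hdec.a_le_a (by omega) hmj hjn, hx.2.2 (hmj.trans_le hjn)]

theorem lt_of_mem_spectralGap (hdec : IsSpectralDecomposition A n lowFull highInf a b) {r s : ℕ}
    (hrs : r < s) (hs : s ≤ n) {x y : ℝ} (hx : x ∈ spectralGap n a b r)
    (hy : y ∈ spectralGap n a b s) : x < y := by
  have := hdec.a_le_a (i := r + 1) (by omega) hrs hs
  linarith [hx.2.2 (hrs.trans_le hs), (hdec.pos_le s (by omega) hs).2, hy.2.1 (by omega)]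

end IsSpectralDecomposition

end SpectralGaps

section ExtendedProjectors

variable {N n : ℕ} {lowFull highInf : Bool} {P P' : ℕ → ℤ → Mat N} {i : ℕ} {l : ℤ}

theorem Matrix.coe_range_toLinAlgEquiv' {M : Mat N} (hM : IsIdempotentElem M) :
    (LinearMap.range (toLinAlgEquiv' M) : Set (Fin N → ℝ)) = {ξ | M *ᵥ ξ = ξ} := by
  ext ξ
  rw [SetLike.mem_coe, LinearMap.IsIdempotentElem.mem_range_iff (hM.map _), toLinAlgEquiv'_apply,
    mem_ofPred_eq]

theorem Matrix.coe_ker_toLinAlgEquiv' (M : Mat N) :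
    (LinearMap.ker (toLinAlgEquiv' M) : Set (Fin N → ℝ)) = {ξ | M *ᵥ ξ = 0} := by
  ext ξ
  rw [SetLike.mem_coe, LinearMap.mem_ker, toLinAlgEquiv'_apply, mem_ofPred_eq]

theorem Matrix.eq_of_fixedPoints_eq_of_ker_eq {M M' : Mat N} (hM : IsIdempotentElem M)
    (hM' : IsIdempotentElem M') (hfix : {ξ | M *ᵥ ξ = ξ} = {ξ | M' *ᵥ ξ = ξ})
    (hker : {ξ | M *ᵥ ξ = 0} = {ξ | M' *ᵥ ξ = 0}) : M = M' :=
  toLinAlgEquiv'.injective <| LinearMap.IsIdempotentElem.ext (hM.map _) (hM'.map _)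
    ⟨SetLike.coe_injective <| by
        rw [coe_range_toLinAlgEquiv' hM, coe_range_toLinAlgEquiv' hM', hfix],
      SetLike.coe_injective (by rw [coe_ker_toLinAlgEquiv', coe_ker_toLinAlgEquiv', hker])⟩

/-- `extProj (m + 1)` is the dichotomy projector at `γ_m`, replaced by `0` if `γ₀` is omitted
and by `1` if `γ_n` is omitted, and padded by `0` below and `1` above; then `W_i(l)` is the
layer `ker ∩ range` of the members `i` and `i + 1` at time `l`. -/
def extProj (n : ℕ) (lowFull highInf : Bool) (P : ℕ → ℤ → Mat N) (i : ℕ) : ℤ → Mat N :=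
  if i = 0 ∨ (i = 1 ∧ lowFull) then 0
  else if n + 1 < i ∨ (i = n + 1 ∧ highInf) then 1
  else P (i - 1)

theorem isGammaIndex_sub_one (h₀ : ¬(i = 0 ∨ (i = 1 ∧ lowFull)))
    (h₁ : ¬(n + 1 < i ∨ (i = n + 1 ∧ highInf))) : IsGammaIndex n lowFull highInf (i - 1) := by
  have : ¬n + 1 < i := fun h => h₁ (Or.inl h)
  refine ⟨by omega, fun h => Bool.eq_false_iff.2 fun hl => h₀ (Or.inr ⟨by omega, hl⟩),
    fun h => Bool.eq_false_iff.2 fun hh => h₁ (Or.inr ⟨by omega, hh⟩)⟩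

theorem extProj_cases (n : ℕ) (lowFull highInf : Bool) (P : ℕ → ℤ → Mat N) (i : ℕ) :
    (extProj n lowFull highInf P i = 0 ∧ i ≤ 1) ∨ (extProj n lowFull highInf P i = 1 ∧ n + 1 ≤ i) ∨
    (extProj n lowFull highInf P i = P (i - 1) ∧ 1 ≤ i ∧ i ≤ n + 1 ∧
      IsGammaIndex n lowFull highInf (i - 1)) := by
  unfold extProj
  split_ifs with h₀ h₁
  · exact Or.inl ⟨rfl, by omega⟩
  · exact Or.inr (Or.inl ⟨rfl, by omega⟩)
  · have hi := isGammaIndex_sub_one h₀ h₁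
    exact Or.inr (Or.inr ⟨rfl, by omega, by have := hi.1; omega, hi⟩)

theorem extProj_zero : extProj n lowFull highInf P 0 = 0 := if_pos (Or.inl rfl)

theorem extProj_of_lt (h : n + 1 < i) : extProj n lowFull highInf P i = 1 := by
  rw [extProj, if_neg (by omega), if_pos (Or.inl h)]

theorem extProj_congr (h : ∀ m, IsGammaIndex n lowFull highInf m → P m l = P' m l) (i : ℕ) :
    extProj n lowFull highInf P i l = extProj n lowFull highInf P' i l := by
  unfold extProj
  split_ifs with h₀ h₁
  · rfl
  · rfl
  · exact h _ (isGammaIndex_sub_one h₀ h₁)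

end ExtendedProjectors

namespace AdmissibleChoice

variable {N n : ℕ} {A : ℤ → GL (Fin N) ℝ} {lowFull highInf : Bool} {a b : ℕ → ℝ}
  {γ γ' : ℕ → ℝ} {P P' : ℕ → ℤ → Mat N} {K K' α α' ε ε' : ℕ → ℝ} {m : ℕ}

theorem nedWith (h : AdmissibleChoice A n lowFull highInf a b γ P K α ε)
    (hm : IsGammaIndex n lowFull highInf m) : NEDWith A (γ m) (P m) (K m) (α m) (ε m) := by
  rcases Nat.eq_zero_or_pos m with rfl | hm0
  · exact (h.1 (hm.2.1 rfl)).2.2.1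
  rcases eq_or_lt_of_le hm.1 with rfl | hmn
  · exact (h.2.1 (hm.2.2 rfl)).2.2.1
  · exact (h.2.2 m hm0 hmn).2.2.1

theorem mem_spectralGap (h : AdmissibleChoice A n lowFull highInf a b γ P K α ε)
    (hdec : IsSpectralDecomposition A n lowFull highInf a b)
    (hm : IsGammaIndex n lowFull highInf m) : γ m ∈ spectralGap n a b m := by
  have hn := hdec.one_le
  rcases Nat.eq_zero_or_pos m with rfl | hm0
  · obtain ⟨hγ, hρ, hned, hstrong⟩ := h.1 (hm.2.1 rfl)
    refine ⟨hγ, by omega, fun _ => lt_of_not_ge fun hle => ?_⟩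
    have ha := hdec.pos_le 1 le_rfl hn
    refine (hdec.Icc_subset_sigmaNED le_rfl hn ⟨le_rfl, ha.2⟩).2 ?_
    rcases hle.lt_or_eq with hlt | heq
    · exact (hρ ⟨ha.1, hlt⟩).2
    · exact heq ▸ ⟨_, _, _, _, hned, hstrong⟩
  rcases eq_or_lt_of_le hm.1 with rfl | hmn
  · obtain ⟨hγ, hρ, hned, hstrong⟩ := h.2.1 (hm.2.2 rfl)
    refine ⟨hγ, fun _ => lt_of_not_ge fun hle => ?_, by omega⟩
    have hb := hdec.pos_le m hm0 le_rfl
    refine (hdec.Icc_subset_sigmaNED hm0 le_rfl ⟨hb.2, le_rfl⟩).2 ?_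
    rcases hle.lt_or_eq with hlt | heq
    · exact (hρ hlt).2
    · exact heq ▸ ⟨_, _, _, _, hned, hstrong⟩
  · obtain ⟨hb, ha, -⟩ := h.2.2 m hm0 hmn
    have hab := hdec.pos_le m hm0 hm.1
    exact ⟨hab.1.trans_le (hab.2.trans hb.le), fun _ => hb, fun _ => ha⟩

theorem stableSet_eq (hN : 0 < N) (h : AdmissibleChoice A n lowFull highInf a b γ P K α ε)
    (hdec : IsSpectralDecomposition A n lowFull highInf a b)
    (hm : IsGammaIndex n lowFull highInf m) (l : ℤ) :
    stableSet A (γ m) (ε m) l = {ξ | P m l *ᵥ ξ = ξ} := by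
  have hned := h.nedWith hm
  have hε := hned.eps_eq_one hN
  rw [hε] at hned ⊢
  exact hned.stableSet_eq (h.mem_spectralGap hdec hm).1 l

theorem unstableSet_eq (hN : 0 < N) (h : AdmissibleChoice A n lowFull highInf a b γ P K α ε)
    (hdec : IsSpectralDecomposition A n lowFull highInf a b)
    (hm : IsGammaIndex n lowFull highInf m) (l : ℤ) :
    unstableSet A (γ m) (ε m) l = {ξ | P m l *ᵥ ξ = 0} := by
  have hned := h.nedWith hm
  have hε := hned.eps_eq_one hN
  rw [hε] at hned ⊢
  exact hned.unstableSet_eq (h.mem_spectralGap hdec hm).1 l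

theorem proj_eq (hN : 0 < N) (h : AdmissibleChoice A n lowFull highInf a b γ P K α ε)
    (h' : AdmissibleChoice A n lowFull highInf a b γ' P' K' α' ε')
    (hdec : IsSpectralDecomposition A n lowFull highInf a b)
    (hm : IsGammaIndex n lowFull highInf m) (l : ℤ) : P m l = P' m l := by
  have hED : ∀ σ ∈ spectralGap n a b m, 0 < σ ∧ HasED A σ := fun σ hσ =>
    ⟨hσ.1, (hasStrongNED_iff_hasED hN).1 (hdec.spectralGap_subset_rhoNED hm hσ).2⟩
  obtain ⟨hS, hU⟩ := stableSet_eq_and_unstableSet_eq_of_isPreconnected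
    (spectralGap_ordConnected m).isPreconnected hED (h.mem_spectralGap hdec hm)
    (h'.mem_spectralGap hdec hm) l
  have hε := (h.nedWith hm).eps_eq_one hN
  have hε' := (h'.nedWith hm).eps_eq_one hN
  refine Matrix.eq_of_fixedPoints_eq_of_ker_eq ((h.nedWith hm).1.1 l) ((h'.nedWith hm).1.1 l) ?_ ?_
  · rw [← h.stableSet_eq hN hdec hm, ← h'.stableSet_eq hN hdec hm, hε, hε', hS]
  · rw [← h.unstableSet_eq hN hdec hm, ← h'.unstableSet_eq hN hdec hm, hε, hε', hU]

theorem isInvariantProjector_extProj (h : AdmissibleChoice A n lowFull highInf a b γ P K α ε)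
    (i : ℕ) : IsInvariantProjector A (extProj n lowFull highInf P i) := by
  rcases extProj_cases n lowFull highInf P i with ⟨he, -⟩ | ⟨he, -⟩ | ⟨he, -, -, hm⟩ <;> rw [he]
  · exact isInvariantProjector_zero
  · exact isInvariantProjector_one
  · exact (h.nedWith hm).1

theorem fixedPoints_subset_of_le (hN : 0 < N)
    (h : AdmissibleChoice A n lowFull highInf a b γ P K α ε)
    (hdec : IsSpectralDecomposition A n lowFull highInf a b) {r s : ℕ}
    (hr : IsGammaIndex n lowFull highInf r) (hs : IsGammaIndex n lowFull highInf s) (hrs : r ≤ s)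
    (l : ℤ) : {ξ | P r l *ᵥ ξ = ξ} ⊆ {ξ | P s l *ᵥ ξ = ξ} := by
  rw [← h.stableSet_eq hN hdec hr, ← h.stableSet_eq hN hdec hs, (h.nedWith hr).eps_eq_one hN,
    (h.nedWith hs).eps_eq_one hN]
  refine stableSet_mono (h.mem_spectralGap hdec hr).1 ?_ l
  rcases hrs.eq_or_lt with rfl | hlt
  · exact le_rfl
  · exact (hdec.lt_of_mem_spectralGap hlt hs.1 (h.mem_spectralGap hdec hr)
      (h.mem_spectralGap hdec hs)).le

theorem ker_subset_of_le (hN : 0 < N)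
    (h : AdmissibleChoice A n lowFull highInf a b γ P K α ε)
    (hdec : IsSpectralDecomposition A n lowFull highInf a b) {r s : ℕ}
    (hr : IsGammaIndex n lowFull highInf r) (hs : IsGammaIndex n lowFull highInf s) (hrs : r ≤ s)
    (l : ℤ) : {ξ | P s l *ᵥ ξ = 0} ⊆ {ξ | P r l *ᵥ ξ = 0} := by
  rw [← h.unstableSet_eq hN hdec hr, ← h.unstableSet_eq hN hdec hs, (h.nedWith hr).eps_eq_one hN,
    (h.nedWith hs).eps_eq_one hN]
  refine unstableSet_anti (h.mem_spectralGap hdec hr).1 ?_ l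
  rcases hrs.eq_or_lt with rfl | hlt
  · exact le_rfl
  · exact (hdec.lt_of_mem_spectralGap hlt hs.1 (h.mem_spectralGap hdec hr)
      (h.mem_spectralGap hdec hs)).le

theorem isProjChain (hN : 0 < N) (h : AdmissibleChoice A n lowFull highInf a b γ P K α ε)
    (hdec : IsSpectralDecomposition A n lowFull highInf a b) (l : ℤ) :
    IsProjChain fun i => toLinAlgEquiv' (extProj n lowFull highInf P i l) := by
  have hidem i : IsIdempotentElem (extProj n lowFull highInf P i l) :=
    (h.isInvariantProjector_extProj i).1 l
  refine ⟨fun i => (hidem i).map _, monotone_nat_of_le_succ fun i => ?_,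
    antitone_nat_of_succ_le fun i => ?_⟩
  · rw [← SetLike.coe_subset_coe, coe_range_toLinAlgEquiv' (hidem i),
      coe_range_toLinAlgEquiv' (hidem (i + 1))]
    rcases extProj_cases n lowFull highInf P i with ⟨he, hi⟩ | ⟨he, hi⟩ | ⟨he, hi, hin, hm⟩ <;>
    rcases extProj_cases n lowFull highInf P (i + 1) with
      ⟨he', hi'⟩ | ⟨he', hi'⟩ | ⟨he', hi', hin', hm'⟩ <;>
    simp only [he, he'] <;> first
      | omega
      | exact h.fixedPoints_subset_of_le hN hdec hm hm' (by omega) l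
      | (intro ξ hξ; simp_all)
  · rw [← SetLike.coe_subset_coe, coe_ker_toLinAlgEquiv', coe_ker_toLinAlgEquiv']
    rcases extProj_cases n lowFull highInf P i with ⟨he, hi⟩ | ⟨he, hi⟩ | ⟨he, hi, hin, hm⟩ <;>
    rcases extProj_cases n lowFull highInf P (i + 1) with
      ⟨he', hi'⟩ | ⟨he', hi'⟩ | ⟨he', hi', hin', hm'⟩ <;>
    simp only [he, he'] <;> first
      | omega
      | exact h.ker_subset_of_le hN hdec hm hm' (by omega) l
      | (intro ξ hξ; simp_all)

theorem specBundle_eq_chainLayer (hN : 0 < N)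
    (h : AdmissibleChoice A n lowFull highInf a b γ P K α ε)
    (hdec : IsSpectralDecomposition A n lowFull highInf a b) {i : ℕ} (hi : i ≤ n + 1) (l : ℤ) :
    specBundle A n lowFull highInf γ ε i l =
      chainLayer (fun j => toLinAlgEquiv' (extProj n lowFull highInf P j l)) i := by
  have hn := hdec.one_le
  rw [chainLayer, Submodule.coe_inf, coe_ker_toLinAlgEquiv',
    coe_range_toLinAlgEquiv' ((h.isInvariantProjector_extProj _).1 l)]
  have hS m (hm : IsGammaIndex n lowFull highInf m) := h.stableSet_eq hN hdec hm l
  have hU m (hm : IsGammaIndex n lowFull highInf m) := h.unstableSet_eq hN hdec hm l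
  unfold specBundle extProj
  rcases Nat.eq_zero_or_pos i with rfl | hi0
  · cases lowFull
    · simp [hS 0 ⟨by omega, fun _ => rfl, by omega⟩, show n ≠ 0 by omega]
    · ext; simp [eq_comm]
  rcases hi.eq_or_lt with rfl | hin
  · cases highInf
    · simp [hU n ⟨le_rfl, by omega, fun _ => rfl⟩, show n ≠ 0 by omega]
    · ext; simp [show n ≠ 0 by omega]
  rw [if_neg hi0.ne', if_neg hin.ne]
  congr 1
  · by_cases hc : i = 1 ∧ lowFull = true
    · simp [hc]
    · have hm : IsGammaIndex n lowFull highInf (i - 1) :=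
        ⟨by omega, fun h => Bool.eq_false_iff.2 fun hl => hc ⟨by omega, hl⟩, by omega⟩
      simp [hc, hi0.ne', show ¬n + 1 < i by omega, hin.ne, hU (i - 1) hm]
  · by_cases hc : i = n ∧ highInf = true
    · simp [hc, show n ≠ 0 by omega]
    · have hm : IsGammaIndex n lowFull highInf i :=
        ⟨by omega, by omega, fun h => Bool.eq_false_iff.2 fun hh => hc ⟨h, hh⟩⟩
      simp [hc, hi0.ne', show ¬n < i by omega, hS i hm]

theorem exists_stableRate_extProj (hN : 0 < N)
    (h : AdmissibleChoice A n lowFull highInf a b γ P K α ε)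
    (hdec : IsSpectralDecomposition A n lowFull highInf a b) {i : ℕ} (hi : 1 ≤ i) (hin : i ≤ n) :
    ∃ μ, 0 < μ ∧ μ < a i ∧ HasStableRate A (extProj n lowFull highInf P i) μ := by
  have ha := (hdec.pos_le i hi hin).1
  rcases extProj_cases n lowFull highInf P i with ⟨he, -⟩ | ⟨he, hi'⟩ | ⟨he, -, -, hm⟩
  · exact ⟨a i / 2, half_pos ha, half_lt_self ha, he ▸ hasStableRate_zero⟩
  · omega
  · have hned := h.nedWith hm
    have hε := hned.eps_eq_one hN
    rw [hε] at hned
    have hγ := h.mem_spectralGap hdec hm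
    have hγa : γ (i - 1) < a i := by simpa [Nat.sub_add_cancel hi] using hγ.2.2 (by omega)
    exact ⟨α (i - 1) * γ (i - 1), mul_pos hned.2.2.1 hγ.1, (hned.mul_lt_self hγ.1).trans hγa,
      he ▸ hned.hasStableRate hγ.1⟩

theorem exists_unstableRate_extProj_succ (hN : 0 < N)
    (h : AdmissibleChoice A n lowFull highInf a b γ P K α ε)
    (hdec : IsSpectralDecomposition A n lowFull highInf a b) {i : ℕ} (hi : 1 ≤ i) :
    ∃ ν, b i < ν ∧ HasUnstableRate A (extProj n lowFull highInf P (i + 1)) ν := by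
  rcases extProj_cases n lowFull highInf P (i + 1) with ⟨he, hi'⟩ | ⟨he, -⟩ | ⟨he, -, -, hm⟩
  · omega
  · exact ⟨b i + 1, lt_add_one _, he ▸ hasUnstableRate_one⟩
  · simp only [Nat.add_sub_cancel] at he hm
    have hned := h.nedWith hm
    have hε := hned.eps_eq_one hN
    rw [hε] at hned
    have hγ := h.mem_spectralGap hdec hm
    exact ⟨γ i / α i, (hγ.2.1 hi).trans (hned.lt_div_self hγ.1), he ▸ hned.hasUnstableRate hγ.1⟩

theorem extProj_ne_extProj_succ (hN : 0 < N)
    (h : AdmissibleChoice A n lowFull highInf a b γ P K α ε)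
    (hdec : IsSpectralDecomposition A n lowFull highInf a b) {i : ℕ} (hi : 1 ≤ i) (hin : i ≤ n)
    (l : ℤ) : extProj n lowFull highInf P i l ≠ extProj n lowFull highInf P (i + 1) l := by
  intro heq
  have hfam := (h.isInvariantProjector_extProj i).eq_of_apply_eq
    (h.isInvariantProjector_extProj (i + 1)) heq
  obtain ⟨μ, hμ, hμa, hs⟩ := h.exists_stableRate_extProj hN hdec hi hin
  obtain ⟨ν, hbν, hu⟩ := h.exists_unstableRate_extProj_succ hN hdec hi
  rw [← hfam] at hu
  have hab := hdec.pos_le i hi hin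
  exact (hdec.Icc_subset_sigmaNED hi hin ⟨le_rfl, hab.2⟩).2 <| (hasStrongNED_iff_hasED hN).2 <|
    hasED_of_rates (h.isInvariantProjector_extProj i) hs hu hμ hμa (hab.2.trans_lt hbν)

end AdmissibleChoice

theorem spectral_theorem_bundles_general {N : ℕ} (A : ℤ → GL (Fin N) ℝ)
    (n : ℕ) (lowFull highInf : Bool) (a b : ℕ → ℝ)
    (hn : 1 ≤ n) (hnN : n ≤ N)
    (hab : ∀ i, 1 ≤ i → i ≤ n → 0 < a i ∧ a i ≤ b i)
    (hsep : ∀ i, 1 ≤ i → i < n → b i < a (i + 1))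
    (hspec : SigmaNED A = ⋃ i ∈ Set.Icc 1 n, specInterval n lowFull highInf a b i)
    (γ : ℕ → ℝ) (P : ℕ → ℤ → Mat N) (K α ε : ℕ → ℝ)
    (hadm : AdmissibleChoice A n lowFull highInf a b γ P K α ε) :
    (∀ i, 1 ≤ i → i ≤ n → ∀ l : ℤ,
      1 ≤ Set.finrank ℝ (specBundle A n lowFull highInf γ ε i l)) ∧
    (∀ i j, i ≤ n + 1 → j ≤ n + 1 → i ≠ j → ∀ l : ℤ,
      specBundle A n lowFull highInf γ ε i l ∩ specBundle A n lowFull highInf γ ε j l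
        = {0}) ∧
    (∀ l : ℤ, ∀ ξ : Fin N → ℝ, ∃ w : ℕ → Fin N → ℝ,
      (∀ i, i ≤ n + 1 → w i ∈ specBundle A n lowFull highInf γ ε i l) ∧
      ξ = ∑ i ∈ Finset.range (n + 2), w i) ∧
    (∀ (γ' : ℕ → ℝ) (P' : ℕ → ℤ → Mat N) (K' α' ε' : ℕ → ℝ),
      AdmissibleChoice A n lowFull highInf a b γ' P' K' α' ε' →
      ∀ i, i ≤ n + 1 → ∀ l : ℤ,
        specBundle A n lowFull highInf γ' ε' i l
          = specBundle A n lowFull highInf γ ε i l) := by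
  have hN : 0 < N := by omega
  have hdec : IsSpectralDecomposition A n lowFull highInf a b := ⟨hn, hab, hsep, hspec⟩
  set E : ℤ → ℕ → Module.End ℝ (Fin N → ℝ) :=
    fun l i => toLinAlgEquiv' (extProj n lowFull highInf P i l)
  have hE l : IsProjChain (E l) := hadm.isProjChain hN hdec l
  have hW i (hi : i ≤ n + 1) l : specBundle A n lowFull highInf γ ε i l = chainLayer (E l) i :=
    hadm.specBundle_eq_chainLayer hN hdec hi l
  refine ⟨fun i hi hin l => ?_, fun i j hi hj hij l => ?_, fun l ξ => ?_,
    fun γ' P' K' α' ε' hadm' i hi l => ?_⟩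
  · rw [hW i (by omega) l, Set.finrank, Submodule.span_eq, Submodule.one_le_finrank_iff]
    exact (hE l).chainLayer_ne_bot <|
      toLinAlgEquiv'.injective.ne (hadm.extProj_ne_extProj_succ hN hdec hi hin l)
  · rw [hW i hi l, hW j hj l, ← Submodule.coe_inf, (hE l).chainLayer_inf_chainLayer hij,
      Submodule.bot_coe]
  · refine ⟨fun i => E l (i + 1) ξ - E l i ξ, fun i hi => hW i hi l ▸ (hE l).sub_mem_chainLayer i ξ,
      ?_⟩
    rw [Finset.sum_range_sub (fun i => E l i ξ)]
    simp [E, extProj_zero, extProj_of_lt (show n + 1 < n + 2 by omega)]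
  · rw [hadm'.specBundle_eq_chainLayer hN hdec hi l, hW i hi l]
    simp_rw [E, extProj_congr fun m hm => (hadm.proj_eq hN hadm' hdec hm l).symm]

/-- (Spectral theorem, spectral bundles part.) If
`Σ_NED(A) = I₁ ∪ ⋯ ∪ I_n` with `1 ≤ n ≤ N` spectral intervals, then for every
admissible choice of resolvent points the spectral bundles `W₀, …, W_{n+1}`
satisfy: `dim W_i(l) ≥ 1` for `i = 1, …, n`; `W_i(l) ∩ W_j(l) = {0}` for `i ≠ j`;
`W₀(l) + ⋯ + W_{n+1}(l) = ℝ^N`; and the bundles are independent of the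
admissible choice. -/
theorem spectral_theorem_bundles {N : ℕ} (A : ℤ → GL (Fin N) ℝ)
    (n : ℕ) (lowFull highInf : Bool) (a b : ℕ → ℝ)
    (hn : 1 ≤ n) (hnN : n ≤ N)
    (hone : n = 1 → lowFull = false ∨ highInf = false)
    (hab : ∀ i, 1 ≤ i → i ≤ n → 0 < a i ∧ a i ≤ b i)
    (hsep : ∀ i, 1 ≤ i → i < n → b i < a (i + 1))
    (hspec : SigmaNED A = ⋃ i ∈ Set.Icc 1 n, specInterval n lowFull highInf a b i)
    (γ : ℕ → ℝ) (P : ℕ → ℤ → Mat N) (K α ε : ℕ → ℝ)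
    (hadm : AdmissibleChoice A n lowFull highInf a b γ P K α ε) :
    (∀ i, 1 ≤ i → i ≤ n → ∀ l : ℤ,
      1 ≤ Set.finrank ℝ (specBundle A n lowFull highInf γ ε i l)) ∧
    (∀ i j, i ≤ n + 1 → j ≤ n + 1 → i ≠ j → ∀ l : ℤ,
      specBundle A n lowFull highInf γ ε i l ∩ specBundle A n lowFull highInf γ ε j l
        = {0}) ∧
    (∀ l : ℤ, ∀ ξ : Fin N → ℝ, ∃ w : ℕ → Fin N → ℝ,
      (∀ i, i ≤ n + 1 → w i ∈ specBundle A n lowFull highInf γ ε i l) ∧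
      ξ = ∑ i ∈ Finset.range (n + 2), w i) ∧
    (∀ (γ' : ℕ → ℝ) (P' : ℕ → ℤ → Mat N) (K' α' ε' : ℕ → ℝ),
      AdmissibleChoice A n lowFull highInf a b γ' P' K' α' ε' →
      ∀ i, i ≤ n + 1 → ∀ l : ℤ,
        specBundle A n lowFull highInf γ' ε' i l
          = specBundle A n lowFull highInf γ ε i l) :=
  spectral_theorem_bundles_general A n lowFull highInf a b hn hnN hab hsep hspec γ P K α ε hadm
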